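/- Let g : ℝ^d → ℝ^d be C¹ with g and its partial derivatives of polynomial growth, and let T(x) = x + g(x). Then for every θ ∈ ℝ^d, E_θ [2 div g(X) + |g(X)|² + d] = E_θ |T(X) − θ|², where X ∼ N(θ, I_d). -/

import Mathlib

open MeasureTheory Real RealInnerProductSpace Filter

noncomputable def diverg {d : ℕ} (g : EuclideanSpace ℝ (Fin d) → EuclideanSpace ℝ (Fin d))
    (x : EuclideanSpace ℝ (Fin d)) : ℝ :=
  ∑ i, fderiv ℝ g x (EuclideanSpace.single i 1) i

noncomputable def laplacian {d : ℕ} (f : EuclideanSpace ℝ (Fin d) → ℝ)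
    (x : EuclideanSpace ℝ (Fin d)) : ℝ :=
  diverg (gradient f) x

noncomputable def gaussPdf {d : ℕ} (θ x : EuclideanSpace ℝ (Fin d)) : ℝ :=
  (2 * Real.pi) ^ (-(d : ℝ) / 2) * Real.exp (-‖x - θ‖ ^ 2 / 2)

/-!
Integrating by parts against the Gaussian density `φ`, whose derivative in direction `v` is
`-⟪x - θ, v⟫ φ x`, gives Stein's identity `∫ (div g) φ = ∫ ⟪x - θ, g x⟫ φ` for every
differentiable `g` such that `g` and `Dg` grow at most polynomially. For `g x = x - θ` it reads
`d ∫ φ = ∫ ‖x - θ‖² φ`. Expanding `‖x + g x - θ‖² = ‖x - θ‖² + 2 ⟪x - θ, g x⟫ + ‖g x‖²` and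
substituting both identities gives the claim.
-/

def HasPolynomialGrowth {E F : Type*} [Norm E] [Norm F] (f : E → F) : Prop :=
  ∃ (C : ℝ) (n : ℕ), ∀ x, ‖f x‖ ≤ C * (1 + ‖x‖) ^ n

section PolynomialGrowth

variable {E F G H : Type*} [SeminormedAddCommGroup E] [SeminormedAddCommGroup F]
  [SeminormedAddCommGroup G] [SeminormedAddCommGroup H]

lemma HasPolynomialGrowth.of_le_rpow {f : E → F} {C r : ℝ}
    (h : ∀ x, ‖f x‖ ≤ C * (1 + ‖x‖) ^ r) : HasPolynomialGrowth f := by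
  refine ⟨|C|, ⌈r⌉₊, fun x => ?_⟩
  have hx : 1 ≤ 1 + ‖x‖ := le_add_of_nonneg_right (norm_nonneg x)
  calc ‖f x‖ ≤ C * (1 + ‖x‖) ^ r := h x
    _ ≤ |C| * (1 + ‖x‖) ^ (⌈r⌉₊ : ℝ) := by
        gcongr
        · exact le_abs_self C
        · exact Nat.le_ceil r
    _ = |C| * (1 + ‖x‖) ^ ⌈r⌉₊ := by rw [rpow_natCast]

lemma hasPolynomialGrowth_sub_const (θ : E) : HasPolynomialGrowth fun x : E => x - θ := by
  refine ⟨1 + ‖θ‖, 1, fun x => ?_⟩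
  have := norm_sub_le x θ
  nlinarith [norm_nonneg x, norm_nonneg θ]

lemma HasPolynomialGrowth.of_norm_le {f : E → F} {k : E → G} (hf : HasPolynomialGrowth f)
    (c : ℝ) (hk : ∀ x, ‖k x‖ ≤ c * ‖f x‖) : HasPolynomialGrowth k := by
  obtain ⟨C, n, hC⟩ := hf
  refine ⟨|c| * C, n, fun x => ?_⟩
  calc ‖k x‖ ≤ |c| * ‖f x‖ := (hk x).trans (by gcongr; exact le_abs_self c)
    _ ≤ |c| * (C * (1 + ‖x‖) ^ n) := by gcongr; exact hC x
    _ = |c| * C * (1 + ‖x‖) ^ n := by ring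

lemma HasPolynomialGrowth.of_norm_le_mul {f : E → F} {g : E → G} {k : E → H}
    (hf : HasPolynomialGrowth f) (hg : HasPolynomialGrowth g)
    (hk : ∀ x, ‖k x‖ ≤ ‖f x‖ * ‖g x‖) : HasPolynomialGrowth k := by
  obtain ⟨C, m, hC⟩ := hf
  obtain ⟨D, n, hD⟩ := hg
  refine ⟨C * D, m + n, fun x => ?_⟩
  calc ‖k x‖ ≤ ‖f x‖ * ‖g x‖ := hk x
    _ ≤ (C * (1 + ‖x‖) ^ m) * (D * (1 + ‖x‖) ^ n) :=
        mul_le_mul (hC x) (hD x) (norm_nonneg _) ((norm_nonneg _).trans (hC x))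
    _ = C * D * (1 + ‖x‖) ^ (m + n) := by ring

lemma one_add_norm_pow_mul_exp_le (n : ℕ) (x θ : E) :
    (1 + ‖x‖) ^ n * exp (-‖x - θ‖ ^ 2 / 2) ≤
      exp (2 * n ^ 2 + ‖θ‖ ^ 2 / 2) * exp (-(1 / 8) * ‖x‖ ^ 2) := by
  have hpow : (1 + ‖x‖) ^ n ≤ exp (n * ‖x‖) := by
    rw [Real.exp_nat_mul, add_comm]
    exact pow_le_pow_left₀ (by positivity) (add_one_le_exp _) n
  have hx : ‖x‖ ≤ ‖x - θ‖ + ‖θ‖ := norm_le_norm_sub_add x θ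
  -- `n t ≤ 2 n² + t² / 8` and `‖x‖² ≤ 2 ‖x - θ‖² + 2 ‖θ‖²`
  have hexp : n * ‖x‖ + -‖x - θ‖ ^ 2 / 2 ≤ 2 * n ^ 2 + ‖θ‖ ^ 2 / 2 + -(1 / 8) * ‖x‖ ^ 2 := by
    nlinarith [sq_nonneg (‖x‖ - 4 * n), sq_nonneg (‖x - θ‖ - ‖θ‖), norm_nonneg x]
  calc (1 + ‖x‖) ^ n * exp (-‖x - θ‖ ^ 2 / 2) ≤ exp (n * ‖x‖) * exp (-‖x - θ‖ ^ 2 / 2) := by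
        gcongr
    _ ≤ _ := by rw [← exp_add, ← exp_add]; exact exp_le_exp.2 hexp

end PolynomialGrowth

lemma integrable_exp_neg_mul_sq_norm {V : Type*} [NormedAddCommGroup V] [InnerProductSpace ℝ V]
    [FiniteDimensional ℝ V] [MeasurableSpace V] [BorelSpace V] {b : ℝ} (hb : 0 < b) :
    Integrable fun x : V => exp (-b * ‖x‖ ^ 2) :=
  Integrable.of_integral_ne_zero <| by
    rw [GaussianFourier.integral_rexp_neg_mul_sq_norm hb]; positivity

lemma norm_apply_single_apply_le {ι : Type*} [Fintype ι] [DecidableEq ι]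
    (L : EuclideanSpace ℝ ι →L[ℝ] EuclideanSpace ℝ ι) (i : ι) :
    ‖L (EuclideanSpace.single i 1) i‖ ≤ ‖L‖ :=
  (PiLp.norm_apply_le _ i).trans <| (L.le_opNorm _).trans_eq <| by simp

section Gaussian

variable {d : ℕ}

local notation "ℝᵈ" => EuclideanSpace ℝ (Fin d)

lemma gaussPdf_nonneg (θ x : ℝᵈ) : 0 ≤ gaussPdf θ x := by
  unfold gaussPdf; positivity

lemma continuous_gaussPdf (θ : ℝᵈ) : Continuous (gaussPdf θ) := by
  unfold gaussPdf; fun_prop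

lemma hasFDerivAt_gaussPdf (θ x : ℝᵈ) :
    HasFDerivAt (gaussPdf θ) (-gaussPdf θ x • innerSL ℝ (x - θ)) x := by
  have hfun : gaussPdf θ = fun y => (2 * π) ^ (-(d : ℝ) / 2) * exp (-1 / 2 * ‖y - θ‖ ^ 2) := by
    funext y; simp only [gaussPdf]; ring_nf
  rw [hfun]
  refine ((((hasFDerivAt_id (𝕜 := ℝ) x).sub_const θ).norm_sq.const_mul _).exp.const_mul
    _).congr_fderiv ?_
  ext v; simp; ring

lemma fderiv_gaussPdf_apply (θ x v : ℝᵈ) :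
    fderiv ℝ (gaussPdf θ) x v = -(⟪x - θ, v⟫ * gaussPdf θ x) := by
  simp [(hasFDerivAt_gaussPdf θ x).fderiv, inner_sub_left, mul_comm]

lemma integrable_one_add_norm_pow_mul_gaussPdf (θ : ℝᵈ) (n : ℕ) :
    Integrable fun x => (1 + ‖x‖) ^ n * gaussPdf θ x := by
  refine ((integrable_exp_neg_mul_sq_norm (b := 1 / 8) (by norm_num)).const_mul
    ((2 * π) ^ (-(d : ℝ) / 2) * exp (2 * n ^ 2 + ‖θ‖ ^ 2 / 2))).mono'
    (by unfold gaussPdf; fun_prop) (ae_of_all _ fun x => ?_)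
  rw [Real.norm_of_nonneg (by unfold gaussPdf; positivity), mul_assoc]
  calc (1 + ‖x‖) ^ n * gaussPdf θ x
      = (2 * π) ^ (-(d : ℝ) / 2) * ((1 + ‖x‖) ^ n * exp (-‖x - θ‖ ^ 2 / 2)) := by
        unfold gaussPdf; ring
    _ ≤ _ := mul_le_mul_of_nonneg_left (one_add_norm_pow_mul_exp_le n x θ) (by positivity)

lemma HasPolynomialGrowth.integrable_mul_gaussPdf {f : ℝᵈ → ℝ} (hf : HasPolynomialGrowth f)
    (hm : AEStronglyMeasurable f) (θ : ℝᵈ) : Integrable fun x => f x * gaussPdf θ x := by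
  obtain ⟨C, n, hC⟩ := hf
  refine ((integrable_one_add_norm_pow_mul_gaussPdf θ n).const_mul C).mono'
    (hm.mul (continuous_gaussPdf θ).aestronglyMeasurable) (ae_of_all _ fun x => ?_)
  rw [norm_mul, Real.norm_of_nonneg (gaussPdf_nonneg θ x), ← mul_assoc]
  exact mul_le_mul_of_nonneg_right (hC x) (gaussPdf_nonneg θ x)

theorem integral_fderiv_mul_gaussPdf {u : ℝᵈ → ℝ} (hu : Differentiable ℝ u)
    (hu_growth : HasPolynomialGrowth u) (θ v : ℝᵈ)
    (hdu : Integrable fun x => fderiv ℝ u x v * gaussPdf θ x) :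
    ∫ x, fderiv ℝ u x v * gaussPdf θ x = ∫ x, ⟪x - θ, v⟫ * u x * gaussPdf θ x := by
  have hinner : HasPolynomialGrowth fun x : ℝᵈ => ⟪x - θ, v⟫ :=
    (hasPolynomialGrowth_sub_const θ).of_norm_le ‖v‖ fun x => by
      rw [Real.norm_eq_abs, mul_comm]; exact abs_real_inner_le_norm _ _
  have hint : Integrable fun x => ⟪x - θ, v⟫ * u x * gaussPdf θ x :=
    (hinner.of_norm_le_mul hu_growth fun x => (norm_mul _ _).le).integrable_mul_gaussPdf
      (by have := hu.continuous; fun_prop) θ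
  have hibp := integral_mul_fderiv_eq_neg_fderiv_mul_of_integrable (f := gaussPdf θ) (g := u)
    (v := v) (hint.neg.congr (ae_of_all _ fun x => by
      simp only [Pi.neg_apply, fderiv_gaussPdf_apply]; ring))
    (by simpa only [mul_comm] using hdu)
    (by simpa only [mul_comm] using
      hu_growth.integrable_mul_gaussPdf hu.continuous.aestronglyMeasurable θ)
    (fun x _ => (hasFDerivAt_gaussPdf θ x).differentiableAt) (fun x _ => hu x)
  calc ∫ x, fderiv ℝ u x v * gaussPdf θ x = ∫ x, gaussPdf θ x * fderiv ℝ u x v := by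
        simp only [mul_comm]
    _ = -∫ x, fderiv ℝ (gaussPdf θ) x v * u x := hibp
    _ = ∫ x, ⟪x - θ, v⟫ * u x * gaussPdf θ x := by
        rw [← integral_neg]; congr 1; ext x; rw [fderiv_gaussPdf_apply]; ring

lemma fderiv_coord_apply {g : ℝᵈ → ℝᵈ} {x : ℝᵈ} (hg : DifferentiableAt ℝ g x) (i : Fin d)
    (v : ℝᵈ) : fderiv ℝ (fun y => g y i) x v = fderiv ℝ g x v i := by
  have h : HasFDerivAt (fun y => g y i) ((PiLp.proj 2 _ i).comp (fderiv ℝ g x)) x :=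
    (PiLp.hasFDerivAt_apply (𝕜 := ℝ) 2 (g x) i).comp x hg.hasFDerivAt
  rw [h.fderiv]; rfl

lemma norm_diverg_le (g : ℝᵈ → ℝᵈ) (x : ℝᵈ) : ‖diverg g x‖ ≤ d * ‖fderiv ℝ g x‖ := by
  simpa [diverg] using
    norm_sum_le_of_le Finset.univ fun i _ => norm_apply_single_apply_le (fderiv ℝ g x) i

lemma measurable_diverg (g : ℝᵈ → ℝᵈ) : Measurable (diverg g) :=
  Finset.measurable_sum _ fun i _ =>
    (EuclideanSpace.proj i).continuous.measurable.comp (measurable_fderiv_apply_const ℝ g _)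

theorem integral_diverg_mul_gaussPdf {g : ℝᵈ → ℝᵈ} (hg : Differentiable ℝ g)
    (hg_growth : HasPolynomialGrowth g) (hdg_growth : HasPolynomialGrowth (fderiv ℝ g))
    (θ : ℝᵈ) : ∫ x, diverg g x * gaussPdf θ x = ∫ x, ⟪x - θ, g x⟫ * gaussPdf θ x := by
  have hpartial : ∀ i, Integrable fun x =>
      fderiv ℝ g x (EuclideanSpace.single i 1) i * gaussPdf θ x := fun i =>
    (hdg_growth.of_norm_le 1 fun x => by
      simpa using norm_apply_single_apply_le (fderiv ℝ g x) i).integrable_mul_gaussPdf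
        ((EuclideanSpace.proj i).continuous.measurable.comp
          (measurable_fderiv_apply_const ℝ g _)).aestronglyMeasurable θ
  have hprod : ∀ i, Integrable fun x => (x i - θ i) * g x i * gaussPdf θ x := fun i =>
    ((hasPolynomialGrowth_sub_const θ).of_norm_le_mul hg_growth fun x => by
      rw [norm_mul]
      exact mul_le_mul (PiLp.norm_apply_le (x - θ) i) (PiLp.norm_apply_le (g x) i)
        (norm_nonneg _) (norm_nonneg _)).integrable_mul_gaussPdf
      (by have := hg.continuous; fun_prop) θ
  have hcoord : ∀ i, ∫ x, fderiv ℝ g x (EuclideanSpace.single i 1) i * gaussPdf θ x =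
      ∫ x, (x i - θ i) * g x i * gaussPdf θ x := fun i => by
    have h := integral_fderiv_mul_gaussPdf (u := fun x => g x i)
      (fun x => (PiLp.hasFDerivAt_apply (𝕜 := ℝ) 2 (g x) i).differentiableAt.comp x (hg x))
      (hg_growth.of_norm_le 1 fun x => by simpa using PiLp.norm_apply_le (g x) i)
      θ (EuclideanSpace.single i 1) (by simpa only [fderiv_coord_apply (hg _)] using hpartial i)
    simpa [fderiv_coord_apply (hg _), EuclideanSpace.inner_single_right] using h
  have hinner : ∀ x, ⟪x - θ, g x⟫ * gaussPdf θ x = ∑ i, (x i - θ i) * g x i * gaussPdf θ x :=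
    fun x => by simp [PiLp.inner_apply, Finset.mul_sum, mul_comm]
  simp only [diverg, Finset.sum_mul, hinner]
  rw [integral_finsetSum _ fun i _ => hpartial i, integral_finsetSum _ fun i _ => hprod i]
  exact Finset.sum_congr rfl fun i _ => hcoord i

lemma diverg_sub_const (θ x : ℝᵈ) : diverg (fun y => y - θ) x = d := by
  rw [diverg, fderiv_sub_const]
  simp

theorem integral_sq_norm_sub_mul_gaussPdf (θ : ℝᵈ) :
    ∫ x, ‖x - θ‖ ^ 2 * gaussPdf θ x = d * ∫ x, gaussPdf θ x := by
  have h := integral_diverg_mul_gaussPdf (g := fun x => x - θ) (differentiable_id.sub_const θ)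
    (hasPolynomialGrowth_sub_const θ)
    ⟨‖ContinuousLinearMap.id ℝ ℝᵈ‖, 0, fun x => by simp [fderiv_sub_const]⟩ θ
  simp only [diverg_sub_const, real_inner_self_eq_norm_sq] at h
  rw [← h, integral_const_mul]

theorem stein_unbiased_risk_estimate {g : ℝᵈ → ℝᵈ} (hg : Differentiable ℝ g)
    (hg_growth : HasPolynomialGrowth g) (hdg_growth : HasPolynomialGrowth (fderiv ℝ g))
    (θ : ℝᵈ) :
    ∫ x, (2 * diverg g x + ‖g x‖ ^ 2 + d) * gaussPdf θ x =
      ∫ x, ‖x + g x - θ‖ ^ 2 * gaussPdf θ x := by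
  have hθ := hasPolynomialGrowth_sub_const θ
  have hg_cont := hg.continuous
  have hdiv : Integrable fun x => diverg g x * gaussPdf θ x :=
    (hdg_growth.of_norm_le d (norm_diverg_le g)).integrable_mul_gaussPdf
      (measurable_diverg g).aestronglyMeasurable θ
  have hsq : Integrable fun x => ‖g x‖ ^ 2 * gaussPdf θ x :=
    (hg_growth.of_norm_le_mul hg_growth fun x => by simp [sq]).integrable_mul_gaussPdf
      (by fun_prop) θ
  have hinner : Integrable fun x => ⟪x - θ, g x⟫ * gaussPdf θ x :=
    (hθ.of_norm_le_mul hg_growth fun x => abs_real_inner_le_norm _ _).integrable_mul_gaussPdf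
      (by fun_prop) θ
  have hsq_sub : Integrable fun x => ‖x - θ‖ ^ 2 * gaussPdf θ x :=
    (hθ.of_norm_le_mul hθ fun x => by simp [sq]).integrable_mul_gaussPdf (by fun_prop) θ
  have hpdf : Integrable (gaussPdf θ) := by
    simpa using integrable_one_add_norm_pow_mul_gaussPdf θ 0
  calc ∫ x, (2 * diverg g x + ‖g x‖ ^ 2 + d) * gaussPdf θ x
      = ∫ x, 2 * (diverg g x * gaussPdf θ x) + ‖g x‖ ^ 2 * gaussPdf θ x +
          d * gaussPdf θ x := by
        congr 1; ext x; ring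
    _ = 2 * (∫ x, diverg g x * gaussPdf θ x) + (∫ x, ‖g x‖ ^ 2 * gaussPdf θ x) +
          d * ∫ x, gaussPdf θ x := by
        rw [integral_add ((hdiv.const_mul 2).fun_add hsq) (hpdf.const_mul _),
          integral_add (hdiv.const_mul 2) hsq, integral_const_mul, integral_const_mul]
    _ = 2 * (∫ x, ⟪x - θ, g x⟫ * gaussPdf θ x) + (∫ x, ‖g x‖ ^ 2 * gaussPdf θ x) +
          ∫ x, ‖x - θ‖ ^ 2 * gaussPdf θ x := by
        rw [integral_diverg_mul_gaussPdf hg hg_growth hdg_growth,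
          integral_sq_norm_sub_mul_gaussPdf]
    _ = ∫ x, 2 * (⟪x - θ, g x⟫ * gaussPdf θ x) + ‖g x‖ ^ 2 * gaussPdf θ x +
          ‖x - θ‖ ^ 2 * gaussPdf θ x := by
        rw [integral_add ((hinner.const_mul 2).fun_add hsq) hsq_sub,
          integral_add (hinner.const_mul 2) hsq, integral_const_mul]
    _ = ∫ x, ‖x + g x - θ‖ ^ 2 * gaussPdf θ x := by
        congr 1; ext x; rw [add_sub_right_comm, norm_add_sq_real]; ring

end Gaussian

theorem stmt_6 {d : ℕ} (g : EuclideanSpace ℝ (Fin d) → EuclideanSpace ℝ (Fin d))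
    (hg : ContDiff ℝ 1 g)
    (hgrowth : ∃ C r : ℝ, 0 < C ∧ 0 < r ∧ ∀ x,
      ‖g x‖ + ‖fderiv ℝ g x‖ ≤ C * (1 + ‖x‖) ^ r)
    (T : EuclideanSpace ℝ (Fin d) → EuclideanSpace ℝ (Fin d))
    (hT : ∀ x, T x = x + g x) (θ : EuclideanSpace ℝ (Fin d)) :
    ∫ x, (2 * diverg g x + ‖g x‖ ^ 2 + d) * gaussPdf θ x =
      ∫ x, ‖T x - θ‖ ^ 2 * gaussPdf θ x := by
  obtain ⟨C, r, -, -, hbound⟩ := hgrowth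
  have hg_growth : HasPolynomialGrowth g :=
    .of_le_rpow fun x => (le_add_of_nonneg_right (norm_nonneg _)).trans (hbound x)
  have hdg_growth : HasPolynomialGrowth (fderiv ℝ g) :=
    .of_le_rpow fun x => (le_add_of_nonneg_left (norm_nonneg _)).trans (hbound x)
  simp only [hT]
  exact stein_unbiased_risk_estimate (hg.differentiable one_ne_zero) hg_growth hdg_growth θ
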